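/- Let X be a locally compact, σ-compact Hausdorff space, let X̂ be a compact Hausdorff space containing X as a dense open subspace, let f be a closed relation on X, and let f̂ be the closure of f in X̂ × X̂. If x, y ∈ X and (x,y) ∈ 𝒢f̂, then either (x,y) ∈ 𝒢f (computed in X × X) or there exists z ∈ X̂ ∖ X such that (x,z) ∈ 𝒢f̂ and (z,y) ∈ 𝒢f̂. -/

import Mathlib

/-- The image of a set `A` under a relation `f ⊆ X × Y`. -/
def relImage {X Y : Type*} (f : Set (X × Y)) (A : Set X) : Set Y :=
  {y | ∃ x ∈ A, (x, y) ∈ f}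

/-- The reverse (inverse) relation of `f ⊆ X × Y`. -/
def relInv {X Y : Type*} (f : Set (X × Y)) : Set (Y × X) :=
  {p | (p.2, p.1) ∈ f}

/-- Composition of relations: `relComp g f = g ∘ f` (first `f`, then `g`). -/
def relComp {X Y Z : Type*} (g : Set (Y × Z)) (f : Set (X × Y)) : Set (X × Z) :=
  {p | ∃ y, (p.1, y) ∈ f ∧ (y, p.2) ∈ g}

/-- A relation on `X` is transitive. -/
def RelTrans {X : Type*} (f : Set (X × X)) : Prop :=
  ∀ x y z : X, (x, y) ∈ f → (y, z) ∈ f → (x, z) ∈ f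

/-- `gRel f` is the smallest closed transitive relation containing `f`:
the intersection of all closed transitive relations containing `f`. -/
def gRel {X : Type*} [TopologicalSpace X] (f : Set (X × X)) : Set (X × X) :=
  ⋂₀ {g : Set (X × X) | f ⊆ g ∧ IsClosed g ∧ RelTrans g}

/-!
Put `S = 𝒢f̂` and `U = X ⊆ X̂`. The relation
`G = (S ∖ U × U) ∪ cl(𝒢f) ∪ {(a, b) | (a, z), (z, b) ∈ S for some z ∉ U}`
contains `f̂`, and is closed: `U × U` is open, and the last part is the projection of a
closed subset of `X̂ × X̂ × X̂` along the compact middle factor. It is also transitive: a chain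
`a → b → c` inside `U` either passes through a point outside `U` or stays in `cl(𝒢f) ∩ U × U`,
which is `𝒢f` since `𝒢f` is closed in `X`. Hence `S ⊆ G`, and a pair of points of `X` in `G`
lies in `𝒢f` or factors through `X̂ ∖ X`.
-/

open Set Topology

section gRel

variable {X : Type*} [TopologicalSpace X]

lemma isClosed_gRel (f : Set (X × X)) : IsClosed (gRel f) :=
  isClosed_sInter fun _ hg => hg.2.1

lemma relTrans_gRel (f : Set (X × X)) : RelTrans (gRel f) :=
  fun a b c hab hbc g hg => hg.2.2 a b c (hab g hg) (hbc g hg)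

lemma subset_gRel (f : Set (X × X)) : f ⊆ gRel f :=
  fun _ hp _ hg => hg.1 hp

lemma gRel_subset {f g : Set (X × X)} (hfg : f ⊆ g) (hg : IsClosed g) (htrans : RelTrans g) :
    gRel f ⊆ g :=
  sInter_subset_of_mem ⟨hfg, hg, htrans⟩

end gRel

lemma RelTrans.preimage_prodMap {X Y : Type*} (φ : X → Y) {g : Set (Y × Y)} (hg : RelTrans g) :
    RelTrans (Prod.map φ φ ⁻¹' g) :=
  fun _ _ _ => hg _ _ _

lemma gRel_subset_preimage_gRel {X Y : Type*} [TopologicalSpace X] [TopologicalSpace Y]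
    {φ : X → Y} (hφ : Continuous φ) {f : Set (X × X)} {g : Set (Y × Y)}
    (hfg : Prod.map φ φ '' f ⊆ g) :
    gRel f ⊆ Prod.map φ φ ⁻¹' gRel g :=
  gRel_subset (image_subset_iff.1 (hfg.trans (subset_gRel g)))
    ((isClosed_gRel g).preimage (hφ.prodMap hφ)) ((relTrans_gRel g).preimage_prodMap φ)

lemma isClosed_relComp {X Y Z : Type*} [TopologicalSpace X] [TopologicalSpace Y]
    [TopologicalSpace Z] [CompactSpace Y] {f : Set (X × Y)} {g : Set (Y × Z)}
    (hf : IsClosed f) (hg : IsClosed g) : IsClosed (relComp g f) := by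
  have hcomp : relComp g f =
      Prod.fst '' {q : (X × Z) × Y | (q.1.1, q.2) ∈ f ∧ (q.2, q.1.2) ∈ g} := by
    ext p
    simp [relComp]
  rw [hcomp]
  exact isClosedMap_fst_of_compactSpace _
    ((hf.preimage (by fun_prop)).inter (hg.preimage (by fun_prop)))

lemma preimage_closure_image_prodMap {X Y : Type*} [TopologicalSpace X] [TopologicalSpace Y]
    {j : X → Y} (hj : IsInducing j) {g : Set (X × X)} (hg : IsClosed g) :
    Prod.map j j ⁻¹' closure (Prod.map j j '' g) = g := by
  rw [← (hj.prodMap hj).closure_eq_preimage_closure_image, hg.closure_eq]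

lemma relTrans_closure_image_prodMap_inter_range {X Y : Type*} [TopologicalSpace X]
    [TopologicalSpace Y] {j : X → Y} (hj : IsInducing j) {g : Set (X × X)} (hg : IsClosed g)
    (htrans : RelTrans g) :
    RelTrans (closure (Prod.map j j '' g) ∩ range j ×ˢ range j) := by
  rintro _ _ _ ⟨hab, ⟨a, rfl⟩, ⟨b, rfl⟩⟩ ⟨hbc, -, ⟨c, rfl⟩⟩
  have hmem (p q : X) : (j p, j q) ∈ closure (Prod.map j j '' g) ↔ (p, q) ∈ g :=
    Set.ext_iff.1 (preimage_closure_image_prodMap hj hg) (p, q)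
  exact ⟨(hmem a c).2 (htrans _ _ _ ((hmem a b).1 hab) ((hmem b c).1 hbc)),
    ⟨a, rfl⟩, ⟨c, rfl⟩⟩

lemma relTrans_diff_union_union_relComp {Y : Type*} {S R : Set (Y × Y)} {U : Set Y}
    (hS : RelTrans S) (hRS : R ⊆ S) (hR : RelTrans (R ∩ U ×ˢ U)) :
    RelTrans ((S \ U ×ˢ U) ∪ R ∪ relComp S (S ∩ univ ×ˢ Uᶜ)) := by
  have hGS : (S \ U ×ˢ U) ∪ R ∪ relComp S (S ∩ univ ×ˢ Uᶜ) ⊆ S :=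
    union_subset (union_subset sdiff_subset hRS)
      fun _ ⟨_, h₁, h₂⟩ => hS _ _ _ h₁.1 h₂
  intro a b c hab hbc
  have habS := hGS hab
  have hbcS := hGS hbc
  by_cases hac : (a, c) ∈ U ×ˢ U
  swap
  · exact Or.inl (Or.inl ⟨hS _ _ _ habS hbcS, hac⟩)
  obtain ⟨ha, hc⟩ := hac
  by_cases hb : b ∈ U
  swap
  · exact Or.inr ⟨b, ⟨habS, trivial, hb⟩, hbcS⟩
  rcases hab with (⟨-, hab⟩ | habR) | ⟨z, ⟨haz, -, hz⟩, hzb⟩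
  · exact absurd ⟨ha, hb⟩ hab
  · rcases hbc with (⟨-, hbc⟩ | hbcR) | ⟨z, ⟨hbz, -, hz⟩, hzc⟩
    · exact absurd ⟨hb, hc⟩ hbc
    · exact Or.inl (Or.inr (hR _ _ _ ⟨habR, ha, hb⟩ ⟨hbcR, hb, hc⟩).1)
    · exact Or.inr ⟨z, ⟨hS _ _ _ habS hbz, trivial, hz⟩, hzc⟩
  · exact Or.inr ⟨z, ⟨haz, trivial, hz⟩, hS _ _ _ hzb hbcS⟩

theorem gRel_compactification_dichotomy_general
    {X : Type*} [TopologicalSpace X]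
    {Xh : Type*} [TopologicalSpace Xh] [CompactSpace Xh]
    (j : X → Xh) (hj : Topology.IsEmbedding j)
    (hopen : IsOpen (Set.range j))
    (f : Set (X × X))
    (fh : Set (Xh × Xh)) (hfh : fh = closure (Prod.map j j '' f))
    (x y : X) (hxy : (j x, j y) ∈ gRel fh) :
    (x, y) ∈ gRel f ∨
      ∃ z : Xh, z ∉ Set.range j ∧ (j x, z) ∈ gRel fh ∧ (z, j y) ∈ gRel fh := by
  set S := gRel fh
  set R := closure (Prod.map j j '' gRel f)
  have hR : Prod.map j j ⁻¹' R = gRel f :=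
    preimage_closure_image_prodMap hj.isInducing (isClosed_gRel f)
  have hfhR : fh ⊆ R := hfh ▸ closure_mono (image_mono (subset_gRel f))
  have hRS : R ⊆ S := closure_minimal
    (image_subset_iff.2 (gRel_subset_preimage_gRel hj.continuous (hfh ▸ subset_closure)))
    (isClosed_gRel fh)
  set G := (S \ range j ×ˢ range j) ∪ R ∪ relComp S (S ∩ univ ×ˢ (range j)ᶜ)
  have hGclosed : IsClosed G :=
    (((isClosed_gRel fh).sdiff (hopen.prod hopen)).union isClosed_closure).union
      (isClosed_relComp ((isClosed_gRel fh).inter (isClosed_univ.prod hopen.isClosed_compl))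
        (isClosed_gRel fh))
  have hGtrans : RelTrans G := relTrans_diff_union_union_relComp (relTrans_gRel fh) hRS
    (relTrans_closure_image_prodMap_inter_range hj.isInducing (isClosed_gRel f) (relTrans_gRel f))
  have hSG : S ⊆ G := gRel_subset (hfhR.trans (subset_union_right.trans subset_union_left))
    hGclosed hGtrans
  rcases hSG hxy with (⟨-, hK⟩ | hxyR) | ⟨z, ⟨hxz, -, hz⟩, hzy⟩
  · exact absurd ⟨⟨x, rfl⟩, ⟨y, rfl⟩⟩ hK
  · exact Or.inl (hR ▸ hxyR)
  · exact Or.inr ⟨z, hz, hxz, hzy⟩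

/-- Let `X` be locally compact, σ-compact Hausdorff, embedded as a dense
open subspace of a compact Hausdorff space `X̂` (via an embedding `j`), let `f` be a
closed relation on `X` and `f̂` the closure of `f` in `X̂ × X̂`.  If `x, y ∈ X` and
`(x,y) ∈ 𝒢f̂`, then either `(x,y) ∈ 𝒢f` or there is `z ∈ X̂ ∖ X` with
`(x,z), (z,y) ∈ 𝒢f̂`. -/
theorem gRel_compactification_dichotomy
    {X : Type*} [TopologicalSpace X] [LocallyCompactSpace X]
    [SigmaCompactSpace X] [T2Space X]
    {Xh : Type*} [TopologicalSpace Xh] [CompactSpace Xh] [T2Space Xh]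
    (j : X → Xh) (hj : Topology.IsEmbedding j)
    (hopen : IsOpen (Set.range j)) (hdense : Dense (Set.range j))
    (f : Set (X × X)) (hf : IsClosed f)
    (fh : Set (Xh × Xh)) (hfh : fh = closure (Prod.map j j '' f))
    (x y : X) (hxy : (j x, j y) ∈ gRel fh) :
    (x, y) ∈ gRel f ∨
      ∃ z : Xh, z ∉ Set.range j ∧ (j x, z) ∈ gRel fh ∧ (z, j y) ∈ gRel fh :=
  gRel_compactification_dichotomy_general j hj hopen f fh hfh x y hxy
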